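/- arXiv:2312.08604 — 4 statements merged into one kernel-verified Lean document; each statement's English description precedes it below -/
import Mathlib

section
/- Let μ be a probability measure on a measurable space S, let J, V : S → ℝ be measurable functions with J(x) ≤ V(x) for all x ∈ S, let N, k be natural numbers with k ≤ N, and let ε, β ∈ (0,1) satisfy ∑_{i=0}^{k} C(N,i) · ε^i · (1−ε)^{N−i} ≤ β. Then, under the product measure μ^⊗N, the probability of the event {(x_1,…,x_N) : at most k indices i satisfy J(x_i) ≤ 0, and μ({x : V(x) ≤ 0}) > ε} is at most β. Equivalently, with probability at least 1−β over the N i.i.d. samples, either more than k empirical safety violations are observed or μ({x : V(x) ≤ 0}) ≤ ε. (Robust Scenario-Based Probabilistic Safety Verification Theorem.) -/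
/-!
Since `J ≤ V`, on the event in question `p := μ {J ≤ 0} ≥ μ {V ≤ 0} > ε`. Covering the
event "at most `k` samples land in `{J ≤ 0}`" by the cylinders fixed by the set of indices
that do bounds its probability by the binomial distribution function
`∑_{i ≤ k} C(N,i) p^i (1-p)^(N-i)`, which is antitone in `p` on `[0, 1]`; hence it is at most
its value at `ε`, which is `≤ β`.
-/

open MeasureTheory Finset ENNReal

noncomputable def binomialCdf (N k : ℕ) (q : ℝ) : ℝ :=
  ∑ i ∈ range (k + 1), (N.choose i : ℝ) * q ^ i * (1 - q) ^ (N - i)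

-- The derivative of the `i`-th term is `c i - c (i + 1)`, so the sum telescopes.
theorem hasDerivAt_binomialCdf (N k : ℕ) (q : ℝ) :
    HasDerivAt (binomialCdf N k)
      (-((N.choose k : ℝ) * (N - k : ℕ) * q ^ k * (1 - q) ^ (N - k - 1))) q := by
  set c : ℕ → ℝ := fun i => (N.choose i : ℝ) * i * q ^ (i - 1) * (1 - q) ^ (N - i) with hc
  have c_succ (i : ℕ) :
      c (i + 1) = (N.choose i : ℝ) * (N - i : ℕ) * q ^ i * (1 - q) ^ (N - i - 1) := by
    have h : (N.choose (i + 1) : ℝ) * (i + 1) = N.choose i * (N - i : ℕ) := by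
      exact_mod_cast N.choose_succ_right_eq i
    simp only [hc, Nat.add_sub_cancel, Nat.sub_sub, Nat.cast_add, Nat.cast_one, ← h]
  have hterm (i : ℕ) : HasDerivAt (fun q : ℝ => (N.choose i : ℝ) * q ^ i * (1 - q) ^ (N - i))
      (c i - c (i + 1)) q := by
    have hpow := ((hasDerivAt_pow i q).const_mul (N.choose i : ℝ)).fun_mul
      ((hasDerivAt_pow (N - i) (1 - q)).comp q ((hasDerivAt_const q 1).sub (hasDerivAt_id q)))
    refine hpow.congr_deriv ?_
    rw [c_succ, hc]
    simp only [Function.comp_apply]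
    ring
  have hsum := HasDerivAt.fun_sum (u := range (k + 1)) fun i _ => hterm i
  rw [sum_range_sub'] at hsum
  refine hsum.congr_deriv ?_
  rw [← c_succ]
  simp [hc]

theorem binomialCdf_antitoneOn (N k : ℕ) : AntitoneOn (binomialCdf N k) (Set.Icc 0 1) := by
  refine antitoneOn_of_deriv_nonpos (convex_Icc 0 1)
    (fun q _ => (hasDerivAt_binomialCdf N k q).continuousAt.continuousWithinAt)
    (fun q _ => (hasDerivAt_binomialCdf N k q).differentiableAt.differentiableWithinAt) ?_
  intro q hq
  rw [interior_Icc] at hq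
  rw [(hasDerivAt_binomialCdf N k q).deriv, neg_nonpos]
  have : 0 ≤ 1 - q := by linarith [hq.2]
  have := hq.1.le
  positivity

theorem ofReal_binomialCdf {N k : ℕ} {q : ℝ} (hq : q ∈ Set.Icc (0 : ℝ) 1) :
    ENNReal.ofReal (binomialCdf N k q) =
      ∑ i ∈ range (k + 1),
        (N.choose i : ℝ≥0∞) * ENNReal.ofReal q ^ i * ENNReal.ofReal (1 - q) ^ (N - i) := by
  have h1q : 0 ≤ 1 - q := by linarith [hq.2]
  have hq0 := hq.1
  rw [binomialCdf, ENNReal.ofReal_sum_of_nonneg fun i _ => by positivity]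
  refine sum_congr rfl fun i _ => ?_
  rw [ENNReal.ofReal_mul (by positivity), ENNReal.ofReal_mul (by positivity),
    ENNReal.ofReal_pow hq0, ENNReal.ofReal_pow h1q, ENNReal.ofReal_natCast]

section ProductMeasure

variable {S ι : Type*} [MeasurableSpace S] [Fintype ι] [DecidableEq ι]
  (μ : Measure S) [SigmaFinite μ] (A : Set S)

theorem measure_pi_pi_ite (T : Finset ι) :
    Measure.pi (fun _ : ι => μ) (Set.univ.pi fun i => if i ∈ T then A else Aᶜ) =
      μ A ^ #T * μ Aᶜ ^ (Fintype.card ι - #T) := by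
  rw [Measure.pi_pi]
  simp only [apply_ite μ]
  rw [prod_ite, prod_const, prod_const, filter_mem_eq_inter, univ_inter, filter_not,
    filter_mem_eq_inter, univ_inter, card_sdiff_of_subset (subset_univ T), card_univ]

theorem measure_pi_card_filter_mem_eq_le [DecidablePred (· ∈ A)] (m : ℕ) :
    Measure.pi (fun _ : ι => μ) {x | #{i | x i ∈ A} = m} ≤
      (Fintype.card ι).choose m * μ A ^ m * μ Aᶜ ^ (Fintype.card ι - m) := by
  have hcover : {x : ι → S | #{i | x i ∈ A} = m} ⊆
      ⋃ T ∈ powersetCard m univ, Set.univ.pi fun i => if i ∈ T then A else Aᶜ := by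
    intro x hx
    refine Set.mem_iUnion₂.mpr ⟨({i | x i ∈ A} : Finset ι),
      mem_powersetCard.mpr ⟨subset_univ _, hx⟩, Set.mem_univ_pi.mpr fun i => ?_⟩
    by_cases h : x i ∈ A <;> simp [h]
  calc _ ≤ _ := measure_mono hcover
    _ ≤ _ := measure_biUnion_finset_le _ _
    _ = _ := by
      rw [sum_congr rfl fun T hT => by rw [measure_pi_pi_ite, (mem_powersetCard.mp hT).2],
        sum_const, card_powersetCard, card_univ, nsmul_eq_mul, mul_assoc]

theorem measure_pi_card_filter_mem_le [DecidablePred (· ∈ A)] (k : ℕ) :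
    Measure.pi (fun _ : ι => μ) {x | #{i | x i ∈ A} ≤ k} ≤
      ∑ m ∈ range (k + 1),
        (Fintype.card ι).choose m * μ A ^ m * μ Aᶜ ^ (Fintype.card ι - m) := by
  have hcover : {x : ι → S | #{i | x i ∈ A} ≤ k} =
      ⋃ m ∈ range (k + 1), {x | #{i | x i ∈ A} = m} := by
    ext x
    simp
  rw [hcover]
  exact (measure_biUnion_finset_le _ _).trans
    (sum_le_sum fun m _ => measure_pi_card_filter_mem_eq_le μ A m)

end ProductMeasure

theorem measure_pi_card_filter_mem_le_binomialCdf {S : Type*} [MeasurableSpace S]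
    (μ : Measure S) [IsProbabilityMeasure μ] {A : Set S} [DecidablePred (· ∈ A)]
    (hA : MeasurableSet A) (N k : ℕ) :
    Measure.pi (fun _ : Fin N => μ) {x | #{i | x i ∈ A} ≤ k} ≤
      ENNReal.ofReal (binomialCdf N k (μ.real A)) := by
  have hcompl : μ Aᶜ = ENNReal.ofReal (1 - μ.real A) := by
    rw [← ofReal_measureReal, measureReal_compl hA, probReal_univ]
  have hq : μ.real A ∈ Set.Icc (0 : ℝ) 1 := ⟨measureReal_nonneg, measureReal_le_one⟩
  calc _ ≤ _ := measure_pi_card_filter_mem_le μ A k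
    _ = _ := by rw [ofReal_binomialCdf hq, hcompl, ofReal_measureReal, Fintype.card_fin]

theorem robust_scenario_verification_general {S : Type*} [MeasurableSpace S]
    (μ : Measure S) [IsProbabilityMeasure μ]
    (J V : S → ℝ) (hJ : Measurable J)
    (hJV : ∀ x, J x ≤ V x)
    (N k : ℕ) (ε β : ℝ)
    (hε : ε ∈ Set.Ioo (0 : ℝ) 1)
    (hcond : ∑ i ∈ Finset.range (k + 1),
        (N.choose i : ℝ) * ε ^ i * (1 - ε) ^ (N - i) ≤ β) :
    Measure.pi (fun _ : Fin N => μ)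
        {x : Fin N → S | (Finset.univ.filter (fun i => J (x i) ≤ 0)).card ≤ k ∧
          ENNReal.ofReal ε < μ {s | V s ≤ 0}}
      ≤ ENNReal.ofReal β := by
  by_cases hVε : ENNReal.ofReal ε < μ {s | V s ≤ 0}
  swap
  · simp [hVε]
  set A : Set S := {y | J y ≤ 0}
  have hεA : ε ≤ μ.real A := by
    have hlt : ENNReal.ofReal ε < μ A :=
      hVε.trans_le (measure_mono fun s hs => (hJV s).trans hs)
    exact ((ENNReal.ofReal_lt_iff_lt_toReal hε.1.le (measure_ne_top μ A)).mp hlt).le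
  calc Measure.pi (fun _ : Fin N => μ) _
      ≤ Measure.pi (fun _ : Fin N => μ) {x | #{i | x i ∈ A} ≤ k} :=
        measure_mono fun x hx => hx.1
    _ ≤ ENNReal.ofReal (binomialCdf N k (μ.real A)) :=
        measure_pi_card_filter_mem_le_binomialCdf μ (measurableSet_le hJ measurable_const) N k
    _ ≤ ENNReal.ofReal (binomialCdf N k ε) :=
        ENNReal.ofReal_le_ofReal <| binomialCdf_antitoneOn N k (Set.Ioo_subset_Icc_self hε)
          ⟨hε.1.le.trans hεA, measureReal_le_one⟩ hεA
    _ ≤ ENNReal.ofReal β := ENNReal.ofReal_le_ofReal hcond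

/-- Robust Scenario-Based Probabilistic Safety Verification
Theorem: if `J ≤ V` pointwise and `∑_{i=0}^{k} C(N,i) ε^i (1-ε)^{N-i} ≤ β`,
then the probability (under `N` i.i.d. samples from `μ`) of the event
"at most `k` empirical safety violations are observed, yet
`μ{x : V(x) ≤ 0} > ε`" is at most `β`. -/
theorem robust_scenario_verification {S : Type*} [MeasurableSpace S]
    (μ : Measure S) [IsProbabilityMeasure μ]
    (J V : S → ℝ) (hJ : Measurable J) (hV : Measurable V)
    (hJV : ∀ x, J x ≤ V x)
    (N k : ℕ) (hk : k ≤ N) (ε β : ℝ)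
    (hε : ε ∈ Set.Ioo (0 : ℝ) 1) (hβ : β ∈ Set.Ioo (0 : ℝ) 1)
    (hcond : ∑ i ∈ Finset.range (k + 1),
        (N.choose i : ℝ) * ε ^ i * (1 - ε) ^ (N - i) ≤ β) :
    Measure.pi (fun _ : Fin N => μ)
        {x : Fin N → S | (Finset.univ.filter (fun i => J (x i) ≤ 0)).card ≤ k ∧
          ENNReal.ofReal ε < μ {s | V s ≤ 0}}
      ≤ ENNReal.ofReal β :=
  robust_scenario_verification_general μ J V hJ hJV N k ε β hε hcond
end

section
/- Let μ be an atomless probability measure on ℝ, let Y_1,…,Y_N be i.i.d. random variables with law μ, let k be a natural number with k < N, and let Y_{(N−k)} denote the (N−k)-th order statistic of Y_1,…,Y_N. Then for every x ∈ [0,1], the probability under the product measure μ^⊗N that μ((−∞, Y_{(N−k)}]) ≤ x equals ∑_{j=N−k}^{N} C(N,j) · x^j · (1−x)^{N−j}; that is, the random coverage μ((−∞, Y_{(N−k)}]) of the conformal prediction set is distributed Beta(N−k, k+1). (Conformal Probabilistic Safety Verification Theorem.) -/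
open MeasureTheory Finset

/-- The `(N-k)`-th order statistic (1-indexed) of `y : Fin N → ℝ`: the value in
position `N-k` when `y₁, …, y_N` are sorted in nondecreasing order (counting
multiplicity). -/
noncomputable def orderStat {N : ℕ} (k : ℕ) (y : Fin N → ℝ) : ℝ :=
  ((Multiset.map y Finset.univ.val).sort (· ≤ ·)).getD (N - k - 1) 0

/-! Write `F` for the CDF of `μ` and `S = F⁻¹(-∞, x]`, so that the coverage of `Y_{(N-k)}` is
at most `x` iff `Y_{(N-k)} ∈ S`. As `S` is a lower set, the `(N-k)`-th smallest sample lies in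
`S` iff at least `N-k` samples do. Since `μ` has no atoms, `F` is continuous, so `S = (-∞, a]`
with `F a = x` and `μ S = x`: the number of samples in `S` is binomial with parameters `N`
and `x`, whose upper tail is the Beta CDF on the right-hand side. -/

theorem List.Pairwise.getElem_mem_iff_lt_countP {α : Type*} [Preorder α] {L : List α}
    (hL : L.Pairwise (· ≤ ·)) {S : Set α} [DecidablePred (· ∈ S)] (hS : IsLowerSet S)
    {i : ℕ} (hi : i < L.length) : L[i] ∈ S ↔ i < L.countP (· ∈ S) := by
  induction L generalizing i with
  | nil => simp at hi
  | cons a L ih =>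
    rw [List.pairwise_cons] at hL
    by_cases ha : a ∈ S
    · cases i with
      | zero => simp [ha]
      | succ j => simp [ha, ih hL.2 (Nat.lt_of_succ_lt_succ hi)]
    · have hnone : ∀ b ∈ a :: L, b ∉ S := by
        rintro b (_ | ⟨_, hb⟩)
        · exact ha
        · exact fun hbS => ha (hS (hL.1 b hb) hbS)
      have hzero : (a :: L).countP (· ∈ S) = 0 := by
        simpa only [List.countP_eq_zero, decide_eq_true_eq] using hnone
      simp only [hzero, Nat.not_lt_zero, iff_false]
      exact hnone _ (List.getElem_mem hi)

theorem orderStat_mem_iff {N k : ℕ} (hk : k < N) {S : Set ℝ} [DecidablePred (· ∈ S)]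
    (hS : IsLowerSet S) (y : Fin N → ℝ) :
    orderStat k y ∈ S ↔ N - k ≤ #{i | y i ∈ S} := by
  set s := Multiset.map y univ.val
  have hlen : (s.sort (· ≤ ·)).length = N := by simp [s]
  have hi : N - k - 1 < (s.sort (· ≤ ·)).length := by omega
  have hcount : (s.sort (· ≤ ·)).countP (· ∈ S) = #{i | y i ∈ S} := by
    rw [← Multiset.coe_countP, Multiset.sort_eq, Multiset.countP_map]
    rfl
  rw [orderStat, List.getD_eq_getElem _ _ hi,
    (Multiset.pairwise_sort s _).getElem_mem_iff_lt_countP hS hi, hcount]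
  omega

section
variable {ι α : Type*} [Fintype ι] [DecidableEq ι] {S : Set α} [DecidablePred (· ∈ S)]

theorem setOf_filter_mem_eq_pi (T : Finset ι) :
    {y : ι → α | ({i | y i ∈ S} : Finset ι) = T}
      = Set.univ.pi fun i => if i ∈ T then S else Sᶜ := by
  ext y
  simp only [Set.mem_ofPred_eq, Set.mem_pi, Set.mem_univ, true_implies, Finset.ext_iff,
    mem_filter, mem_univ, true_and]
  refine forall_congr' fun i => ?_
  split_ifs with hi <;> simp [hi]

variable [MeasurableSpace α] (μ : Measure α) [SigmaFinite μ]

theorem measure_pi_setOf_filter_mem_eq (T : Finset ι) :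
    Measure.pi (fun _ : ι => μ) {y | ({i | y i ∈ S} : Finset ι) = T}
      = μ S ^ #T * μ Sᶜ ^ (Fintype.card ι - #T) := by
  simp_rw [setOf_filter_mem_eq_pi, Measure.pi_pi, apply_ite μ, Finset.prod_ite, prod_const]
  simp [Finset.filter_not, card_univ_sdiff]

theorem measure_pi_setOf_le_card_filter_mem (hS : MeasurableSet S) (m : ℕ) :
    Measure.pi (fun _ : ι => μ) {y | m ≤ #{i | y i ∈ S}}
      = ∑ j ∈ Icc m (Fintype.card ι),
          ((Fintype.card ι).choose j : ENNReal) * μ S ^ j * μ Sᶜ ^ (Fintype.card ι - j) := by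
  set N := Fintype.card ι
  set f : (ι → α) → Finset ι := fun y => {i | y i ∈ S}
  set g : ℕ → ENNReal := fun j => if m ≤ j then μ S ^ j * μ Sᶜ ^ (N - j) else 0
  have hevent : {y | m ≤ #(f y)} = f ⁻¹' ↑(univ.filter fun T : Finset ι => m ≤ #T) := by
    ext y; simp
  calc Measure.pi (fun _ : ι => μ) {y | m ≤ #(f y)}
      = ∑ T ∈ univ.filter fun T : Finset ι => m ≤ #T, μ S ^ #T * μ Sᶜ ^ (N - #T) := by
        rw [hevent, ← sum_measure_preimage_singleton]
        · exact sum_congr rfl fun T _ => measure_pi_setOf_filter_mem_eq μ T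
        · intro T _
          change MeasurableSet {y | f y = T}
          rw [setOf_filter_mem_eq_pi]
          exact .univ_pi fun i => by split_ifs; exacts [hS, hS.compl]
    _ = ∑ T ∈ (univ : Finset ι).powerset, g #T := by
        rw [powerset_univ, sum_filter]
    _ = ∑ j ∈ range (N + 1), N.choose j • g j := by
        rw [sum_powerset_apply_card, card_univ]
    _ = _ := by
        have hIcc : (range (N + 1)).filter (m ≤ ·) = Icc m N := by ext; simp; omega
        simp only [g, smul_ite, smul_zero, ← sum_filter, hIcc, nsmul_eq_mul, mul_assoc]

end

namespace ProbabilityTheory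
open Set Filter Topology

theorem continuous_cdf (μ : Measure ℝ) [IsProbabilityMeasure μ] [NullSingletonClass μ] :
    Continuous (cdf μ) := by
  refine continuous_iff_continuousAt.2 fun a => ?_
  have hjump : cdf μ a - Function.leftLim (cdf μ) a ≤ 0 := by
    rw [← ENNReal.ofReal_eq_zero, ← StieltjesFunction.measure_singleton, measure_cdf]
    exact measure_singleton a
  have hleft : Function.leftLim (cdf μ) a ≤ cdf μ a := (monotone_cdf μ).leftLim_le le_rfl
  rw [(monotone_cdf μ).continuousAt_iff_leftLim_eq_rightLim, (cdf μ).rightLim_eq]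
  linarith

theorem measure_cdf_preimage_Iic (μ : Measure ℝ) [IsProbabilityMeasure μ]
    [NullSingletonClass μ] {x : ℝ} (hx : x ∈ Set.Icc 0 1) : μ (cdf μ ⁻¹' Iic x) = ENNReal.ofReal x := by
  set S := cdf μ ⁻¹' Iic x
  rcases hx.2.eq_or_lt with rfl | hx1
  · have : S = univ := eq_univ_of_forall fun t => cdf_le_one μ t
    simp [this]
  have hbdd : BddAbove S := by
    obtain ⟨c, hc⟩ := ((tendsto_cdf_atTop μ).eventually (eventually_gt_nhds hx1)).exists
    refine ⟨c, fun t (ht : cdf μ t ≤ x) => le_of_not_gt fun hct => ?_⟩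
    linarith [monotone_cdf μ hct.le]
  rcases S.eq_empty_or_nonempty with hS | hS
  · obtain rfl : x = 0 := by
      refine le_antisymm (le_of_not_gt fun hx0 => ?_) hx.1
      obtain ⟨t, ht⟩ := ((tendsto_cdf_atBot μ).eventually (eventually_lt_nhds hx0)).exists
      exact hS.subset (show t ∈ S from ht.le)
    simp [hS]
  set a := sSup S
  have ha : cdf μ a ≤ x := (isClosed_Iic.preimage (continuous_cdf μ)).csSup_mem hS hbdd
  have hSa : S = Iic a := Subset.antisymm (fun t ht => le_csSup hbdd ht)
    fun t ht => (monotone_cdf μ ht).trans ha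
  have hxa : x ≤ cdf μ a := by
    by_contra! hlt
    have hnear : ∀ᶠ t in 𝓝[>] a, cdf μ t < x := nhdsWithin_le_nhds
      ((continuous_cdf μ).continuousAt.eventually_lt continuousAt_const hlt)
    obtain ⟨t, ht, hat⟩ := (hnear.and self_mem_nhdsWithin).exists
    exact (le_csSup hbdd (show t ∈ S from ht.le)).not_gt hat
  rw [hSa, ← ofReal_cdf, le_antisymm ha hxa]

end ProbabilityTheory

open ProbabilityTheory in
/-- Conformal Probabilistic Safety Verification Theorem: for `N`
i.i.d. samples from an atomless probability measure `μ` on `ℝ`, the random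
coverage `μ((-∞, Y_{(N-k)}])` of the conformal prediction set is distributed
`Beta(N-k, k+1)`: for every `x ∈ [0,1]`, the probability that the coverage is
`≤ x` equals `∑_{j=N-k}^{N} C(N,j) x^j (1-x)^{N-j}`. -/
theorem conformal_coverage_beta (μ : Measure ℝ) [IsProbabilityMeasure μ]
    [NullSingletonClass μ] (N k : ℕ) (hk : k < N) (x : ℝ) (hx : x ∈ Set.Icc (0 : ℝ) 1) :
    Measure.pi (fun _ : Fin N => μ)
        {Y : Fin N → ℝ | (μ (Set.Iic (orderStat k Y))).toReal ≤ x}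
      = ENNReal.ofReal
          (∑ j ∈ Finset.Icc (N - k) N, (N.choose j : ℝ) * x ^ j * (1 - x) ^ (N - j)) := by
  classical
  set S := cdf μ ⁻¹' Set.Iic x
  have hevent : {Y : Fin N → ℝ | (μ (Set.Iic (orderStat k Y))).toReal ≤ x}
      = {Y | N - k ≤ #{i | Y i ∈ S}} := by
    ext Y
    rw [Set.mem_ofPred_eq, Set.mem_ofPred_eq,
      ← orderStat_mem_iff hk ((isLowerSet_Iic x).preimage (monotone_cdf μ))]
    simp [cdf_eq_real, Measure.real]
  have hS : MeasurableSet S := (monotone_cdf μ).measurable measurableSet_Iic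
  have hμS : μ S = ENNReal.ofReal x := measure_cdf_preimage_Iic μ hx
  have hμSc : μ Sᶜ = ENNReal.ofReal (1 - x) := by
    rw [prob_compl_eq_one_sub hS, hμS, ENNReal.ofReal_sub 1 hx.1, ENNReal.ofReal_one]
  have h1x : 0 ≤ 1 - x := sub_nonneg.2 hx.2
  have hterm (j : ℕ) : 0 ≤ (N.choose j : ℝ) * x ^ j :=
    mul_nonneg (Nat.cast_nonneg _) (pow_nonneg hx.1 j)
  rw [hevent, measure_pi_setOf_le_card_filter_mem μ hS, Fintype.card_fin, hμS, hμSc,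
    ENNReal.ofReal_sum_of_nonneg fun j _ => mul_nonneg (hterm j) (pow_nonneg h1x _)]
  refine sum_congr rfl fun j _ => ?_
  rw [ENNReal.ofReal_mul (hterm j), ENNReal.ofReal_mul (Nat.cast_nonneg _),
    ENNReal.ofReal_pow hx.1, ENNReal.ofReal_pow h1x, ENNReal.ofReal_natCast]
end

section
/- Let μ be an atomless probability measure on ℝ, let Y_1,…,Y_N be i.i.d. random variables with law μ, let k be a natural number with k < N, let Y_{(N−k)} denote the (N−k)-th order statistic of Y_1,…,Y_N, and let ε, β ∈ (0,1) satisfy ∑_{i=0}^{k} C(N,i) · ε^i · (1−ε)^{N−i} ≤ β. Then the probability under the product measure μ^⊗N that μ({y : y > Y_{(N−k)}}) > ε is at most β; that is, with probability at least 1−β over the calibration sample, the conformal prediction set {y : y ≤ Y_{(N−k)}} has coverage at least 1−ε. (Conformal Probabilistic Safety Verification Lemma / scenario form of split conformal prediction.) -/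
/-!
Choose `t` with `μ [t, ∞) = ε` and `μ (-∞, t) = 1 - ε`, possible because the cdf of an
atomless law is continuous. If the set `{y > Y_(N-k)}` has mass more than `ε`, then
`Y_(N-k) < t`, so at most `k` of the samples lie in `[t, ∞)`. The number of samples in
`[t, ∞)` is binomial with parameters `N` and `ε`, whence the bound.
-/

open MeasureTheory Finset ProbabilityTheory

theorem List.countP_le_of_pairwise_of_getElem_lt {α : Type*} [Preorder α] [DecidableLE α]
    {l : List α} (hl : l.Pairwise (· ≤ ·)) {m : ℕ} (hm : m < l.length) {t : α}
    (ht : l[m] < t) : l.countP (fun x => t ≤ x) ≤ l.length - (m + 1) := by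
  have hhead : (l.take (m + 1)).countP (fun x => t ≤ x) = 0 := by
    refine List.countP_eq_zero.2 fun x hx => ?_
    obtain ⟨i, hi, rfl⟩ := List.mem_take_iff_getElem.1 hx
    have hle : l[i] ≤ l[m] :=
      hl.rel_get_of_le (a := ⟨i, by omega⟩) (b := ⟨m, hm⟩)
        (by simp only [Fin.mk_le_mk]; omega)
    simpa using (hle.trans_lt ht).not_ge
  calc l.countP (fun x => t ≤ x)
      = (l.take (m + 1)).countP (fun x => t ≤ x)
          + (l.drop (m + 1)).countP (fun x => t ≤ x) := by
        rw [← List.countP_append, List.take_append_drop]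
    _ ≤ (l.drop (m + 1)).length := by rw [hhead, zero_add]; exact List.countP_le_length
    _ = l.length - (m + 1) := List.length_drop

theorem card_filter_le_of_orderStat_lt {N k : ℕ} (hk : k < N) {y : Fin N → ℝ} {t : ℝ}
    (h : orderStat k y < t) : #{i | t ≤ y i} ≤ k := by
  set l := (Multiset.map y univ.val).sort (· ≤ ·)
  have hlen : l.length = N := by simp [l]
  have hm : N - k - 1 < l.length := by omega
  have hcount : #{i | t ≤ y i} = l.countP (fun x => t ≤ x) := by
    rw [card_def, filter_val, ← Multiset.countP_map, ← Multiset.coe_countP, Multiset.sort_eq]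
  have := List.countP_le_of_pairwise_of_getElem_lt (l := l) (Multiset.pairwise_sort _ _) hm
    (by rwa [orderStat, List.getD_eq_getElem _ _ hm] at h)
  omega

theorem measurableSet_univ_pi_ite {ι α : Type*} [Countable ι] [DecidableEq ι]
    [MeasurableSpace α] {S : Set α} (hS : MeasurableSet S) (s : Finset ι) :
    MeasurableSet (Set.univ.pi fun i => if i ∈ s then S else Sᶜ) :=
  .univ_pi fun i => by split_ifs <;> [exact hS; exact hS.compl]

section Binomial

variable {ι α : Type*} [Fintype ι] [DecidableEq ι] {S : Set α} [DecidablePred (· ∈ S)]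

theorem mem_univ_pi_ite_iff {s : Finset ι} {Y : ι → α} :
    Y ∈ Set.univ.pi (fun i => if i ∈ s then S else Sᶜ)
      ↔ ({i | Y i ∈ S} : Finset ι) = s := by
  simp only [Set.mem_univ_pi, Finset.ext_iff, mem_filter, mem_univ, true_and]
  refine forall_congr' fun i => ?_
  by_cases hi : i ∈ s <;> simp [hi]

theorem setOf_card_filter_mem_eq_biUnion (j : ℕ) :
    {Y : ι → α | #{i | Y i ∈ S} = j}
      = ⋃ s ∈ powersetCard j univ, Set.univ.pi fun i => if i ∈ s then S else Sᶜ := by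
  ext Y
  simp only [Set.mem_ofPred_eq, Set.mem_iUnion, mem_powersetCard, subset_univ, true_and,
    exists_prop, mem_univ_pi_ite_iff]
  exact ⟨fun h => ⟨_, h, rfl⟩, by rintro ⟨s, hs, rfl⟩; exact hs⟩

variable [MeasurableSpace α] (μ : Measure α) [SigmaFinite μ]

theorem measure_pi_setOf_card_filter_mem_eq (hS : MeasurableSet S) (j : ℕ) :
    Measure.pi (fun _ : ι => μ) {Y | #{i | Y i ∈ S} = j}
      = (Fintype.card ι).choose j * μ S ^ j * μ Sᶜ ^ (Fintype.card ι - j) := by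
  have hpi : ∀ s ∈ powersetCard j (univ : Finset ι),
      Measure.pi (fun _ => μ) (Set.univ.pi fun i => if i ∈ s then S else Sᶜ)
        = μ S ^ j * μ Sᶜ ^ (Fintype.card ι - j) := by
    intro s hs
    rw [Measure.pi_pi]
    simp only [apply_ite μ]
    rw [prod_ite]
    simp [(mem_powersetCard.1 hs).2, filter_not, card_sdiff]
  rw [setOf_card_filter_mem_eq_biUnion, measure_biUnion_finset, sum_congr rfl hpi, sum_const,
    card_powersetCard, card_univ, nsmul_eq_mul, mul_assoc]
  · intro s _ s' _ hne
    exact Set.disjoint_left.2 fun Y hs hs' =>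
      hne ((mem_univ_pi_ite_iff.1 hs).symm.trans (mem_univ_pi_ite_iff.1 hs'))
  · exact fun s _ => measurableSet_univ_pi_ite hS s

theorem measure_pi_setOf_card_filter_mem_le (hS : MeasurableSet S) (k : ℕ) :
    Measure.pi (fun _ : ι => μ) {Y | #{i | Y i ∈ S} ≤ k}
      = ∑ j ∈ range (k + 1),
          (Fintype.card ι).choose j * μ S ^ j * μ Sᶜ ^ (Fintype.card ι - j) := by
  have hunion : {Y : ι → α | #{i | Y i ∈ S} ≤ k}
      = ⋃ j ∈ range (k + 1), {Y | #{i | Y i ∈ S} = j} := by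
    ext Y
    simp
  rw [hunion, measure_biUnion_finset]
  · exact sum_congr rfl fun j _ => measure_pi_setOf_card_filter_mem_eq μ hS j
  · intro j _ j' _ hne
    exact Set.disjoint_left.2 fun Y (hj : _ = j) hj' => hne (hj.symm.trans hj')
  · intro j _
    rw [setOf_card_filter_mem_eq_biUnion]
    exact Finset.measurableSet_biUnion _ fun s _ => measurableSet_univ_pi_ite hS s

end Binomial

theorem StieltjesFunction.continuous_of_measure_singleton (f : StieltjesFunction ℝ)
    (h : ∀ x, f.measure {x} = 0) : Continuous f := by
  refine continuous_iff_continuousAt.2 fun x => continuousAt_iff_continuous_left_right.2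
    ⟨?_, f.right_continuous x⟩
  rw [continuousWithinAt_Iio_iff_Iic.symm, f.mono.continuousWithinAt_Iio_iff_leftLim_eq]
  have hx := h x
  rw [f.measure_singleton, ENNReal.ofReal_eq_zero, sub_nonpos] at hx
  exact le_antisymm (f.mono.leftLim_le le_rfl) hx

theorem ProbabilityTheory.continuous_cdf_s9 (μ : Measure ℝ) [IsProbabilityMeasure μ]
    [NullSingletonClass μ] : Continuous (cdf μ) :=
  (cdf μ).continuous_of_measure_singleton fun x => by rw [measure_cdf, measure_singleton]

theorem ProbabilityTheory.exists_cdf_eq (μ : Measure ℝ) [IsProbabilityMeasure μ]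
    [NullSingletonClass μ] {p : ℝ} (hp : p ∈ Set.Ioo 0 1) : ∃ t, cdf μ t = p := by
  obtain ⟨a, ha⟩ := ((tendsto_cdf_atBot μ).eventually_lt_const hp.1).exists
  obtain ⟨b, hb⟩ := ((tendsto_cdf_atTop μ).eventually_const_lt hp.2).exists
  exact intermediate_value_univ a b (continuous_cdf_s9 μ) ⟨ha.le, hb.le⟩

theorem exists_measure_Ici_eq_and_measure_Iio_eq (μ : Measure ℝ) [IsProbabilityMeasure μ]
    [NullSingletonClass μ] {p : ℝ} (hp : p ∈ Set.Ioo 0 1) :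
    ∃ t, μ (Set.Ici t) = ENNReal.ofReal p ∧ μ (Set.Iio t) = ENNReal.ofReal (1 - p) := by
  obtain ⟨t, ht⟩ := exists_cdf_eq μ (p := 1 - p) ⟨by linarith [hp.2], by linarith [hp.1]⟩
  have hIio : μ (Set.Iio t) = ENNReal.ofReal (1 - p) := by
    rw [measure_congr Iio_ae_eq_Iic, ← ofReal_cdf, ht]
  refine ⟨t, ?_, hIio⟩
  rw [← Set.compl_Iio, prob_compl_eq_one_sub measurableSet_Iio, hIio, ← ENNReal.ofReal_one,
    ← ENNReal.ofReal_sub _ (by linarith [hp.2]), sub_sub_cancel]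

theorem ENNReal.ofReal_sum_choose_mul_pow_mul_pow {p : ℝ} (hp₀ : 0 ≤ p) (hp₁ : p ≤ 1)
    (n : ℕ) (s : Finset ℕ) :
    ENNReal.ofReal (∑ i ∈ s, (n.choose i : ℝ) * p ^ i * (1 - p) ^ (n - i))
      = ∑ i ∈ s, n.choose i * ENNReal.ofReal p ^ i * ENNReal.ofReal (1 - p) ^ (n - i) := by
  have hq : 0 ≤ 1 - p := sub_nonneg.2 hp₁
  rw [ENNReal.ofReal_sum_of_nonneg fun i _ => by positivity]
  refine sum_congr rfl fun i _ => ?_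
  rw [ENNReal.ofReal_mul (by positivity), ENNReal.ofReal_mul (by positivity),
    ENNReal.ofReal_natCast, ENNReal.ofReal_pow hp₀, ENNReal.ofReal_pow hq]

theorem conformal_scenario_guarantee_general (μ : Measure ℝ) [IsProbabilityMeasure μ]
    [NullSingletonClass μ] (N k : ℕ) (hk : k < N) (ε β : ℝ)
    (hε : ε ∈ Set.Ioo (0 : ℝ) 1)
    (hcond : ∑ i ∈ Finset.range (k + 1),
        (N.choose i : ℝ) * ε ^ i * (1 - ε) ^ (N - i) ≤ β) :
    Measure.pi (fun _ : Fin N => μ)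
        {Y : Fin N → ℝ | ENNReal.ofReal ε < μ {y : ℝ | orderStat k Y < y}}
      ≤ ENNReal.ofReal β := by
  obtain ⟨t, hIci, hIio⟩ := exists_measure_Ici_eq_and_measure_Iio_eq μ hε
  have hsub : {Y : Fin N → ℝ | ENNReal.ofReal ε < μ {y : ℝ | orderStat k Y < y}}
      ⊆ {Y | #{i | Y i ∈ Set.Ici t} ≤ k} := by
    intro Y (hY : ENNReal.ofReal ε < _)
    refine card_filter_le_of_orderStat_lt hk (not_le.1 fun hle => hY.not_ge ?_)
    calc μ (Set.Ioi (orderStat k Y)) ≤ μ (Set.Ici t) :=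
          measure_mono ((Set.Ioi_subset_Ioi hle).trans Set.Ioi_subset_Ici_self)
      _ = ENNReal.ofReal ε := hIci
  calc Measure.pi (fun _ : Fin N => μ)
        {Y : Fin N → ℝ | ENNReal.ofReal ε < μ {y : ℝ | orderStat k Y < y}}
      ≤ Measure.pi (fun _ : Fin N => μ) {Y | #{i | Y i ∈ Set.Ici t} ≤ k} := measure_mono hsub
    _ = ∑ i ∈ range (k + 1),
          N.choose i * ENNReal.ofReal ε ^ i * ENNReal.ofReal (1 - ε) ^ (N - i) := by
      rw [measure_pi_setOf_card_filter_mem_le μ measurableSet_Ici, Fintype.card_fin,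
        Set.compl_Ici, hIci, hIio]
    _ = ENNReal.ofReal
          (∑ i ∈ range (k + 1), (N.choose i : ℝ) * ε ^ i * (1 - ε) ^ (N - i)) :=
      (ENNReal.ofReal_sum_choose_mul_pow_mul_pow hε.1.le hε.2.le N _).symm
    _ ≤ ENNReal.ofReal β := ENNReal.ofReal_le_ofReal hcond

/-- Conformal Probabilistic Safety Verification Lemma / scenario
form of split conformal prediction: for `N` i.i.d. samples from an atomless
probability measure `μ` on `ℝ` and `ε, β ∈ (0,1)` with
`∑_{i=0}^{k} C(N,i) ε^i (1-ε)^{N-i} ≤ β`, the probability that the conformal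
prediction set `{y : y ≤ Y_{(N-k)}}` has coverage less than `1-ε` (i.e. that
`μ{y : y > Y_{(N-k)}} > ε`) is at most `β`. -/
theorem conformal_scenario_guarantee (μ : Measure ℝ) [IsProbabilityMeasure μ]
    [NullSingletonClass μ] (N k : ℕ) (hk : k < N) (ε β : ℝ)
    (hε : ε ∈ Set.Ioo (0 : ℝ) 1) (hβ : β ∈ Set.Ioo (0 : ℝ) 1)
    (hcond : ∑ i ∈ Finset.range (k + 1),
        (N.choose i : ℝ) * ε ^ i * (1 - ε) ^ (N - i) ≤ β) :
    Measure.pi (fun _ : Fin N => μ)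
        {Y : Fin N → ℝ | ENNReal.ofReal ε < μ {y : ℝ | orderStat k Y < y}}
      ≤ ENNReal.ofReal β :=
  conformal_scenario_guarantee_general μ N k hk ε β hε hcond
end

section
/- Let Y_1,…,Y_N, Y_{N+1} be i.i.d. real-valued random variables (with arbitrary common law, not necessarily atomless), let k be a natural number with k < N, and let Y_{(N−k)} denote the (N−k)-th order statistic of the first N variables Y_1,…,Y_N. Then P(Y_{N+1} ≤ Y_{(N−k)}) ≥ (N−k)/(N+1). Moreover, if the common law is atomless, then P(Y_{N+1} ≤ Y_{(N−k)}) = (N−k)/(N+1). -/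
/-!
Write `R_j` for the number of indices `i` (including `j` itself) with `Y_j ≤ Y_i`; the event
`Y_{N+1} ≤ Y_{(N-k)}` is `R_{N+1} > k + 1`. The i.i.d. law is invariant under permutations of the
coordinates, so all events `R_j > k + 1` have the same probability `p`, and `(N + 1) p` is the
expected number of indices `j` with `R_j > k + 1`. Pointwise at least `N - k` indices qualify,
since among those with `R_j ≤ k + 1` the one with the smallest value has `R_j` at least their
number; exactly `N - k` qualify when the values are distinct, which holds almost surely when the
law is atomless.
-/

open MeasureTheory Finset

open ProbabilityTheory
open scoped ENNReal

theorem List.Pairwise.le_getElem_iff_length_sub_le_countP {α : Type*} [LinearOrder α]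
    {l : List α} (hl : l.Pairwise (· ≤ ·)) {m : ℕ} (hm : m < l.length) (t : α) :
    t ≤ l[m] ↔ l.length - m ≤ l.countP (t ≤ ·) := by
  constructor
  · intro ht
    have hdrop : ∀ x ∈ l.drop m, t ≤ x := by
      have := hl.drop (i := m)
      rw [List.drop_eq_getElem_cons hm, List.pairwise_cons] at this
      rw [List.drop_eq_getElem_cons hm]
      rintro x (_ | ⟨_, hx⟩)
      exacts [ht, ht.trans (this.1 x hx)]
    calc l.length - m = (l.drop m).countP (t ≤ ·) := by
          rw [List.countP_eq_length.2 (by simpa using hdrop), List.length_drop]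
      _ ≤ l.countP (t ≤ ·) := (List.drop_sublist m l).countP_le
  · intro hc
    by_contra! ht
    have htake : ∀ x ∈ l.take (m + 1), x < t := by
      have := hl.take (i := m + 1)
      rw [List.take_add_one, List.getElem?_eq_getElem hm] at this ⊢
      rw [Option.toList_some, List.pairwise_append] at this
      simp only [Option.toList_some, List.mem_append, List.mem_singleton]
      rintro x (hx | rfl)
      exacts [(this.2.2 x hx _ (List.mem_singleton_self _)).trans_lt ht, ht]
    have : l.countP (t ≤ ·) ≤ l.length - (m + 1) := calc
      l.countP (t ≤ ·)
          = (l.take (m + 1)).countP (t ≤ ·) + (l.drop (m + 1)).countP (t ≤ ·) := by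
        rw [← List.countP_append, List.take_append_drop]
      _ = (l.drop (m + 1)).countP (t ≤ ·) := by
        rw [List.countP_eq_zero.2 (by simpa using htake), zero_add]
      _ ≤ (l.drop (m + 1)).length := List.countP_le_length
      _ = l.length - (m + 1) := List.length_drop
    omega

theorem le_orderStat_iff {N k : ℕ} (hk : k < N) (y : Fin N → ℝ) (t : ℝ) :
    t ≤ orderStat k y ↔ k < #{i | t ≤ y i} := by
  rw [orderStat]
  set l := (Multiset.map y univ.val).sort (· ≤ ·)
  have hlen : l.length = N := by simp [l]
  have hcount : l.countP (t ≤ ·) = #{i | t ≤ y i} := by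
    rw [← Multiset.coe_countP, Multiset.sort_eq, Multiset.countP_map]
    rfl
  rw [List.getD_eq_getElem _ _ (by omega),
    (Multiset.pairwise_sort _ _).le_getElem_iff_length_sub_le_countP, hcount, hlen]
  omega

section numGe

variable {ι α : Type*} [Fintype ι] [LinearOrder α]

def numGe (Y : ι → α) (j : ι) : ℕ := #{i | Y j ≤ Y i}

theorem numGe_le_card (Y : ι → α) (j : ι) : numGe Y j ≤ Fintype.card ι :=
  card_le_univ _

theorem numGe_lt_numGe_of_lt {Y : ι → α} {j j' : ι} (h : Y j < Y j') :
    numGe Y j' < numGe Y j :=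
  card_lt_card <| (ssubset_iff_of_subset fun i hi => by
    simp only [mem_filter, mem_univ, true_and] at hi ⊢; exact h.le.trans hi).2
    ⟨j, by simp, by simpa using h⟩

theorem numGe_injective {Y : ι → α} (hY : Function.Injective Y) :
    Function.Injective (numGe Y) :=
  fun j j' h => hY <| by
    by_contra hne
    rcases lt_or_gt_of_ne hne with hlt | hlt
    exacts [(numGe_lt_numGe_of_lt hlt).ne' h, (numGe_lt_numGe_of_lt hlt).ne h]

theorem card_filter_numGe_le (Y : ι → α) (m : ℕ) : #{j | numGe Y j ≤ m} ≤ m := by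
  rcases ({j | numGe Y j ≤ m} : Finset ι).eq_empty_or_nonempty with hS | hS
  · simp [hS]
  · obtain ⟨j₀, hj₀, hmin⟩ := exists_min_image _ Y hS
    calc #{j | numGe Y j ≤ m} ≤ numGe Y j₀ :=
          card_le_card fun j hj => mem_filter.2 ⟨mem_univ _, hmin j hj⟩
      _ ≤ m := (mem_filter.1 hj₀).2

theorem card_sub_le_card_filter_lt_numGe (Y : ι → α) (m : ℕ) :
    Fintype.card ι - m ≤ #{j | m < numGe Y j} := by
  have := card_filter_add_card_filter_not (s := univ) (fun j => m < numGe Y j)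
  simp only [not_lt, card_univ] at this
  have := card_filter_numGe_le Y m
  omega

theorem card_filter_lt_numGe_of_injective {Y : ι → α} (hY : Function.Injective Y) (m : ℕ) :
    #{j | m < numGe Y j} = Fintype.card ι - m := by
  refine le_antisymm ?_ (card_sub_le_card_filter_lt_numGe Y m)
  calc #{j | m < numGe Y j} ≤ #(Ioc m (Fintype.card ι)) := by
        refine card_le_card_of_injOn (numGe Y) (fun j hj => ?_) (numGe_injective hY).injOn
        simp only [coe_filter, mem_univ, true_and, Set.mem_ofPred_eq] at hj
        simpa using ⟨hj, numGe_le_card Y j⟩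
    _ = Fintype.card ι - m := Nat.card_Ioc _ _

theorem numGe_comp_equiv {κ : Type*} [Fintype κ] (Y : ι → α) (e : κ ≃ ι) (j : κ) :
    numGe (Y ∘ e) j = numGe Y (e j) :=
  card_equiv e (by simp)

theorem numGe_last {N : ℕ} (Y : Fin (N + 1) → α) :
    numGe Y (Fin.last N) = #{i : Fin N | Y (Fin.last N) ≤ Y i.castSucc} + 1 := by
  rw [numGe, card_filter, card_filter, Fin.sum_univ_castSucc]
  simp

end numGe

theorem MeasureTheory.Measure.prod_diagonal_eq_zero {α : Type*} [MeasurableSpace α]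
    [MeasurableEq α] (μ ν : Measure α) [SFinite ν] [NullSingletonClass ν] :
    μ.prod ν (Set.diagonal α) = 0 := by
  rw [Measure.prod_apply measurableSet_diagonal]
  simp [Set.preimage, Set.diagonal]

theorem MeasureTheory.Measure.pi_eval_eq_eval_null {ι α : Type*} [Fintype ι]
    [MeasurableSpace α] [MeasurableEq α] (μ : ι → Measure α)
    [∀ i, IsProbabilityMeasure (μ i)] {i j : ι} (hij : i ≠ j) [NullSingletonClass (μ j)] :
    Measure.pi μ {Y | Y i = Y j} = 0 := by
  have hmeas : Measurable fun Y : ι → α => (Y i, Y j) :=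
    (measurable_pi_apply i).prodMk (measurable_pi_apply j)
  have hpair : (Measure.pi μ).map (fun Y => (Y i, Y j)) = (μ i).prod (μ j) := by
    have hindep : (fun Y : ι → α => Y i) ⟂ᵢ[Measure.pi μ] (fun Y => Y j) :=
      (iIndepFun_pi (X := fun _ => id) fun _ => aemeasurable_id).indepFun hij
    have := hindep.map_prod_eq_prod_map_map (measurable_pi_apply i).aemeasurable
      (measurable_pi_apply j).aemeasurable
    rwa [(measurePreserving_eval μ i).map_eq, (measurePreserving_eval μ j).map_eq] at this
  calc Measure.pi μ {Y | Y i = Y j}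
      = (Measure.pi μ).map (fun Y => (Y i, Y j)) (Set.diagonal α) :=
        (Measure.map_apply hmeas measurableSet_diagonal).symm
    _ = 0 := by rw [hpair, Measure.prod_diagonal_eq_zero]

theorem MeasureTheory.Measure.ae_injective_pi {ι α : Type*} [Fintype ι] [MeasurableSpace α]
    [MeasurableEq α] (μ : ι → Measure α) [∀ i, IsProbabilityMeasure (μ i)]
    [∀ i, NullSingletonClass (μ i)] :
    ∀ᵐ Y ∂Measure.pi μ, Function.Injective Y := by
  simp only [Function.Injective, ae_all_iff]
  intro i j
  obtain rfl | hij := eq_or_ne i j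
  · exact ae_of_all _ fun _ _ => rfl
  · filter_upwards [compl_mem_ae_iff.2 (Measure.pi_eval_eq_eval_null μ hij)] with Y hY h
    exact absurd h hY

theorem MeasureTheory.Measure.pi_preimage_comp_perm {ι α : Type*} [Fintype ι]
    [MeasurableSpace α] (μ : Measure α) [SigmaFinite μ] (σ : Equiv.Perm ι)
    (s : Set (ι → α)) :
    Measure.pi (fun _ => μ) ((· ∘ σ) ⁻¹' s) = Measure.pi (fun _ => μ) s :=
  ((measurePreserving_piCongrLeft (fun _ => μ) σ).symm _).measure_preimage_equiv s

theorem MeasureTheory.lintegral_card_filter_mem {Ω ι : Type*} [MeasurableSpace Ω] [Fintype ι]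
    (μ : Measure Ω) {E : ι → Set Ω} (hE : ∀ j, MeasurableSet (E j))
    [∀ x, DecidablePred (x ∈ E ·)] :
    ∫⁻ x, #{j | x ∈ E j} ∂μ = ∑ j, μ (E j) := by
  have hcard : ∀ x, (#{j | x ∈ E j} : ℝ≥0∞) = ∑ j, (E j).indicator 1 x := fun x => by
    simp only [card_filter, Nat.cast_sum, Nat.cast_ite, Nat.cast_one, Nat.cast_zero,
      Set.indicator_apply, Pi.one_apply]
  simp_rw [hcard]
  rw [lintegral_finsetSum _ fun j _ => measurable_one.indicator (hE j)]
  exact sum_congr rfl fun j _ => lintegral_indicator_one (hE j)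

section iid

variable {ι α : Type*} [Fintype ι] [LinearOrder α] [TopologicalSpace α]
  [OrderClosedTopology α] [SecondCountableTopology α] [MeasurableSpace α]
  [OpensMeasurableSpace α] (μ : Measure α)

theorem measurable_numGe (j : ι) : Measurable fun Y : ι → α => numGe Y j := by
  simp only [numGe, card_filter]
  exact Finset.measurable_sum _ fun i _ => Measurable.ite
    (measurableSet_le (measurable_pi_apply j) (measurable_pi_apply i))
    measurable_const measurable_const

theorem card_mul_measure_lt_numGe_eq_lintegral [SigmaFinite μ] (m : ℕ) (j : ι) :
    Fintype.card ι * Measure.pi (fun _ => μ) {Y | m < numGe Y j} =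
      ∫⁻ Y : ι → α, #{j' | m < numGe Y j'} ∂Measure.pi (fun _ => μ) := by
  refine Eq.trans ?_ (lintegral_card_filter_mem _ (E := fun j' => {Y | m < numGe Y j'})
    fun j' => measurable_numGe j' measurableSet_Ioi).symm
  rw [← nsmul_eq_mul, ← card_univ (α := ι), ← sum_const]
  refine sum_congr rfl fun j' _ => ?_
  classical
  rw [← Measure.pi_preimage_comp_perm μ (Equiv.swap j j')]
  simp [numGe_comp_equiv]

theorem card_sub_le_card_mul_measure_lt_numGe [IsProbabilityMeasure μ] (m : ℕ) (j : ι) :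
    ((Fintype.card ι - m : ℕ) : ℝ≥0∞) ≤
      Fintype.card ι * Measure.pi (fun _ => μ) {Y | m < numGe Y j} := by
  rw [card_mul_measure_lt_numGe_eq_lintegral]
  calc ((Fintype.card ι - m : ℕ) : ℝ≥0∞)
      = ∫⁻ _, ((Fintype.card ι - m : ℕ) : ℝ≥0∞) ∂Measure.pi (fun _ => μ) := by simp
    _ ≤ _ := lintegral_mono fun Y => Nat.cast_le.2 (card_sub_le_card_filter_lt_numGe Y m)

theorem card_mul_measure_lt_numGe [IsProbabilityMeasure μ] [NullSingletonClass μ]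
    (m : ℕ) (j : ι) :
    Fintype.card ι * Measure.pi (fun _ => μ) {Y | m < numGe Y j} =
      (Fintype.card ι - m : ℕ) := by
  rw [card_mul_measure_lt_numGe_eq_lintegral, lintegral_congr_ae <|
    (Measure.ae_injective_pi _).mono fun Y hY => by rw [card_filter_lt_numGe_of_injective hY]]
  simp

end iid

/-- marginal coverage property of split conformal prediction:
for `N+1` i.i.d. real random variables with common law `μ`, letting
`Y_{(N-k)}` be the `(N-k)`-th order statistic of the first `N` of them,
`P(Y_{N+1} ≤ Y_{(N-k)}) ≥ (N-k)/(N+1)`; moreover if `μ` is atomless then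
`P(Y_{N+1} ≤ Y_{(N-k)}) = (N-k)/(N+1)`. -/
theorem conformal_marginal_coverage (μ : Measure ℝ) [IsProbabilityMeasure μ]
    (N k : ℕ) (hk : k < N) :
    ENNReal.ofReal (((N : ℝ) - k) / ((N : ℝ) + 1)) ≤
      Measure.pi (fun _ : Fin (N + 1) => μ)
        {Y : Fin (N + 1) → ℝ |
          Y (Fin.last N) ≤ orderStat k (fun i : Fin N => Y i.castSucc)} ∧
    (NoAtoms μ →
      Measure.pi (fun _ : Fin (N + 1) => μ)
        {Y : Fin (N + 1) → ℝ |
          Y (Fin.last N) ≤ orderStat k (fun i : Fin N => Y i.castSucc)}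
      = ENNReal.ofReal (((N : ℝ) - k) / ((N : ℝ) + 1))) := by
  have hevent : {Y : Fin (N + 1) → ℝ | Y (Fin.last N) ≤ orderStat k fun i => Y i.castSucc} =
      {Y | k + 1 < numGe Y (Fin.last N)} := by
    ext Y
    simp [le_orderStat_iff hk, numGe_last]
  have hcoverage : ENNReal.ofReal (((N : ℝ) - k) / ((N : ℝ) + 1)) =
      ((Fintype.card (Fin (N + 1)) - (k + 1) : ℕ) : ℝ≥0∞) / Fintype.card (Fin (N + 1)) := by
    rw [Fintype.card_fin, Nat.add_sub_add_right, ENNReal.ofReal_div_of_pos (by positivity),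
      ← Nat.cast_sub hk.le, ENNReal.ofReal_natCast, ← Nat.cast_add_one, ENNReal.ofReal_natCast]
  have hcard : (Fintype.card (Fin (N + 1)) : ℝ≥0∞) ≠ 0 := by simp
  rw [hevent, hcoverage]
  refine ⟨(ENNReal.div_le_iff hcard (ENNReal.natCast_ne_top _)).2 ?_,
    fun hμ => (ENNReal.eq_div_iff hcard (ENNReal.natCast_ne_top _)).2 ?_⟩
  · rw [mul_comm]
    exact card_sub_le_card_mul_measure_lt_numGe μ _ _
  · have : NullSingletonClass μ := hμ
    exact card_mul_measure_lt_numGe μ _ _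
end
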